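/- Let n1 ≥ 5, n2 ≥ 1 and n3 ≥ 2. Then the edge metric dimension of G_{n1,n2,n3} satisfies edim(G_{n1,n2,n3}) ≥ n3. -/
import Mathlib


/-- `S` is a metric generator of `G`: every pair of distinct vertices is
identified by some vertex of `S` via distances. -/
def IsMetricGenerator {V : Type*} (G : SimpleGraph V) (S : Set V) : Prop :=
  ∀ u v : V, u ≠ v → ∃ z ∈ S, G.dist u z ≠ G.dist v z

/-- The metric dimension of `G`: the least cardinality of a (finite) metric generator. -/
noncomputable def metricDim {V : Type*} (G : SimpleGraph V) : ℕ :=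
  sInf {n | ∃ S : Set V, S.Finite ∧ IsMetricGenerator G S ∧ S.ncard = n}

/-- Distance from an edge (unordered pair) to a vertex:
`d(uv, z) = min (d u z) (d v z)`. -/
noncomputable def edgeDist {V : Type*} (G : SimpleGraph V) (e : Sym2 V) (z : V) : ℕ :=
  Sym2.lift ⟨fun u v => min (G.dist u z) (G.dist v z), fun u v => by simp [min_comm]⟩ e

/-- `S` is an edge metric generator of `G`: every pair of distinct edges is
distinguished by some vertex of `S`. -/
def IsEdgeMetricGenerator {V : Type*} (G : SimpleGraph V) (S : Set V) : Prop :=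
  ∀ e ∈ G.edgeSet, ∀ f ∈ G.edgeSet, e ≠ f → ∃ z ∈ S, edgeDist G e z ≠ edgeDist G f z

/-- The edge metric dimension of `G`: the least cardinality of a (finite) edge
metric generator. -/
noncomputable def edgeMetricDim {V : Type*} (G : SimpleGraph V) : ℕ :=
  sInf {n | ∃ S : Set V, S.Finite ∧ IsEdgeMetricGenerator G S ∧ S.ncard = n}
/-- Vertices of the graph `G_{n1,n2,n3}`: cycle vertices `a 0, …, a (n1-1)`
(with `a k` standing for the paper's `a_{k+1}`), path vertices
`b 0, …, b (n2-1)`, the special vertices `c` and `i`, and pendant vertices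
`j 0, …, j (n3-1)` attached to `i`. -/
inductive GVert (n1 n2 n3 : ℕ) : Type where
  | a : Fin n1 → GVert n1 n2 n3
  | b : Fin n2 → GVert n1 n2 n3
  | c : GVert n1 n2 n3
  | i : GVert n1 n2 n3
  | j : Fin n3 → GVert n1 n2 n3

/-- Base relation whose symmetrization gives the edges of `G_{n1,n2,n3}`:
the cycle `a_1 a_2 ⋯ a_{n1} a_1`, the path `b_1 b_2 ⋯ b_{n2}` joined by the
edge `a_2 b_1`, the edge `a_{n1} c`, the edge `a_1 i`, and the pendant edges
`i j_t`. -/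
def GRel (n1 n2 n3 : ℕ) : GVert n1 n2 n3 → GVert n1 n2 n3 → Prop
  | .a k, .a l => (l : ℕ) = ((k : ℕ) + 1) % n1
  | .a k, .b m => (k : ℕ) = 1 ∧ (m : ℕ) = 0
  | .b m, .b m' => (m' : ℕ) = (m : ℕ) + 1
  | .a k, .c => (k : ℕ) = n1 - 1
  | .a k, .i => (k : ℕ) = 0
  | .i, .j _ => True
  | _, _ => False

/-- The graph `G_{n1,n2,n3}` from the paper. -/
def GGraph (n1 n2 n3 : ℕ) : SimpleGraph (GVert n1 n2 n3) :=
  SimpleGraph.fromRel (GRel n1 n2 n3)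

section Aux

variable {n1 n2 n3 : ℕ}

open SimpleGraph

instance : Finite (GVert n1 n2 n3) := by
  have hinj : Function.Injective
      (fun x : GVert n1 n2 n3 => (match x with
        | .a k => Sum.inl k
        | .b m => Sum.inr (Sum.inl m)
        | .c => Sum.inr (Sum.inr (Sum.inl true))
        | .i => Sum.inr (Sum.inr (Sum.inl false))
        | .j r => Sum.inr (Sum.inr (Sum.inr r)) : Fin n1 ⊕ Fin n2 ⊕ Bool ⊕ Fin n3)) := by
    intro x y h
    cases x <;> cases y <;> simp_all
  exact Finite.of_injective _ hinj

lemma GVert.j_injective : Function.Injective (GVert.j : Fin n3 → GVert n1 n2 n3) := by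
  intro x y h; cases h; rfl

/-- Swap the pendant vertices `j s` and `j t`. -/
def swapJ (s t : Fin n3) : GVert n1 n2 n3 → GVert n1 n2 n3
  | .j r => .j (Equiv.swap s t r)
  | x => x

lemma swapJ_invol (s t : Fin n3) (x : GVert n1 n2 n3) : swapJ s t (swapJ s t x) = x := by
  cases x <;> simp [swapJ]

lemma grel_swapJ (s t : Fin n3) {u v : GVert n1 n2 n3} (h : GRel n1 n2 n3 u v) :
    GRel n1 n2 n3 (swapJ s t u) (swapJ s t v) := by
  cases u <;> cases v <;> simpa [swapJ, GRel] using h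

lemma adj_swapJ (s t : Fin n3) {u v : GVert n1 n2 n3}
    (h : (GGraph n1 n2 n3).Adj u v) :
    (GGraph n1 n2 n3).Adj (swapJ s t u) (swapJ s t v) := by
  rw [GGraph, SimpleGraph.fromRel_adj] at h ⊢
  obtain ⟨hne, hrel⟩ := h
  refine ⟨fun he => hne ?_, hrel.imp (grel_swapJ s t) (grel_swapJ s t)⟩
  have := congrArg (swapJ s t) he
  simpa [swapJ_invol] using this

/-- The swap as a graph homomorphism. -/
def swapJHom (s t : Fin n3) : GGraph n1 n2 n3 →g GGraph n1 n2 n3 where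
  toFun := swapJ s t
  map_rel' := adj_swapJ s t

lemma dist_swapJ_le (s t : Fin n3) (u v : GVert n1 n2 n3) :
    (GGraph n1 n2 n3).dist (swapJ s t u) (swapJ s t v) ≤ (GGraph n1 n2 n3).dist u v := by
  by_cases hr : (GGraph n1 n2 n3).Reachable u v
  · obtain ⟨p, hp⟩ := hr.exists_walk_length_eq_dist
    calc (GGraph n1 n2 n3).dist (swapJ s t u) (swapJ s t v)
        ≤ (p.map (swapJHom s t)).length := SimpleGraph.dist_le _
      _ = p.length := SimpleGraph.Walk.length_map _ _
      _ = _ := hp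
  · have h2 : ¬ (GGraph n1 n2 n3).Reachable (swapJ s t u) (swapJ s t v) := by
      intro ⟨q⟩
      have : (GGraph n1 n2 n3).Reachable (swapJ s t (swapJ s t u)) (swapJ s t (swapJ s t v)) :=
        ⟨q.map (swapJHom s t)⟩
      rw [swapJ_invol, swapJ_invol] at this
      exact hr this
    rw [SimpleGraph.dist_eq_zero_of_not_reachable hr,
        SimpleGraph.dist_eq_zero_of_not_reachable h2]

lemma dist_swapJ (s t : Fin n3) (u v : GVert n1 n2 n3) :
    (GGraph n1 n2 n3).dist (swapJ s t u) (swapJ s t v) = (GGraph n1 n2 n3).dist u v := by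
  refine le_antisymm (dist_swapJ_le s t u v) ?_
  have := dist_swapJ_le s t (swapJ s t u) (swapJ s t v)
  rwa [swapJ_invol, swapJ_invol] at this

lemma adj_of_grel {u v : GVert n1 n2 n3} (hne : u ≠ v) (h : GRel n1 n2 n3 u v) :
    (GGraph n1 n2 n3).Adj u v := by
  rw [GGraph, SimpleGraph.fromRel_adj]
  exact ⟨hne, Or.inl h⟩

lemma reach_a (h1 : 5 ≤ n1) :
    ∀ m (hm : m < n1), (GGraph n1 n2 n3).Reachable .i (.a ⟨m, hm⟩) := by
  intro m
  induction m with
  | zero =>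
    intro hm
    exact ((adj_of_grel (by simp) (by simp [GRel])).reachable).symm
  | succ k ih =>
    intro hm
    have hk : k < n1 := by omega
    refine (ih hk).trans (adj_of_grel ?_ ?_).reachable
    · intro h
      have : k = k + 1 := by
        have := congrArg (fun x : GVert n1 n2 n3 => match x with | .a l => (l : ℕ) | _ => 0) h
        simpa using this
      omega
    · show ((⟨k+1, hm⟩ : Fin n1) : ℕ) = (((⟨k, hk⟩ : Fin n1) : ℕ) + 1) % n1
      simp [Nat.mod_eq_of_lt hm]

lemma reach_all (h1 : 5 ≤ n1) (h2 : 1 ≤ n2) :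
    ∀ v : GVert n1 n2 n3, (GGraph n1 n2 n3).Reachable .i v := by
  have hreach_b : ∀ m (hm : m < n2), (GGraph n1 n2 n3).Reachable .i (.b ⟨m, hm⟩) := by
    intro m
    induction m with
    | zero =>
      intro hm
      refine (reach_a h1 1 (by omega)).trans (adj_of_grel (by simp) ?_).reachable
      show ((⟨1, by omega⟩ : Fin n1) : ℕ) = 1 ∧ ((⟨0, hm⟩ : Fin n2) : ℕ) = 0
      simp
    | succ k ih =>
      intro hm
      have hk : k < n2 := by omega
      refine (ih hk).trans (adj_of_grel ?_ ?_).reachable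
      · intro h
        have : k = k + 1 := by
          have := congrArg (fun x : GVert n1 n2 n3 => match x with | .b l => (l : ℕ) | _ => 0) h
          simpa using this
        omega
      · show ((⟨k+1, hm⟩ : Fin n2) : ℕ) = ((⟨k, hk⟩ : Fin n2) : ℕ) + 1
        simp
  intro v
  cases v with
  | a k =>
    have := reach_a (n2 := n2) (n3 := n3) h1 k.val k.isLt
    simpa using this
  | b m =>
    have := hreach_b m.val m.isLt
    simpa using this
  | c =>
    refine (reach_a h1 (n1 - 1) (by omega)).trans (adj_of_grel (by simp) ?_).reachable
    show ((⟨n1 - 1, by omega⟩ : Fin n1) : ℕ) = n1 - 1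
    simp
  | i => exact SimpleGraph.Reachable.refl _
  | j r => exact (adj_of_grel (by simp) (by simp [GRel])).reachable

/-- Potential function used to lower-bound distances to pendant vertices `j r`. -/
def phiJ (n1 : ℕ) : GVert n1 n2 n3 → ℕ
  | .a k => min (k : ℕ) (n1 - (k : ℕ)) + 2
  | .b m => (m : ℕ) + 4
  | .c => 4
  | .i => 1
  | .j _ => 0

lemma phiJ_grel (h1 : 5 ≤ n1) {u v : GVert n1 n2 n3} (h : GRel n1 n2 n3 u v) :
    phiJ n1 u ≤ phiJ n1 v + 1 ∧ phiJ n1 v ≤ phiJ n1 u + 1 := by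
  cases u <;> cases v <;> simp only [GRel, phiJ] at h ⊢
  case a.a k l =>
    have hk := k.isLt
    have hl := l.isLt
    rcases Nat.lt_or_ge ((k : ℕ) + 1) n1 with hlt | hge
    · rw [Nat.mod_eq_of_lt hlt] at h
      omega
    · have hkk : (k : ℕ) + 1 = n1 := by omega
      rw [hkk, Nat.mod_self] at h
      omega
  case a.b k m =>
    obtain ⟨hk, hm⟩ := h
    rw [hk, hm]
    omega
  case a.c k =>
    rw [h]
    have : min (n1 - 1) (n1 - (n1 - 1)) = 1 := by omega
    omega
  case a.i k =>
    rw [h]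
    omega
  case b.b m m' =>
    omega
  case i.j r =>
    omega
  all_goals exact absurd h not_false

lemma phiJ_walk (h1 : 5 ≤ n1) {u v : GVert n1 n2 n3} (p : (GGraph n1 n2 n3).Walk u v) :
    phiJ n1 u ≤ phiJ n1 v + p.length ∧ phiJ n1 v ≤ phiJ n1 u + p.length := by
  induction p with
  | nil => simp
  | @cons u w v h p ih =>
    have hadj : phiJ n1 u ≤ phiJ n1 w + 1 ∧ phiJ n1 w ≤ phiJ n1 u + 1 := by
      rw [GGraph, SimpleGraph.fromRel_adj] at h
      rcases h.2 with h' | h'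
      · exact phiJ_grel h1 h'
      · exact (phiJ_grel h1 h').symm
    simp only [SimpleGraph.Walk.length_cons]
    omega

lemma phiJ_dist (h1 : 5 ≤ n1) {u v : GVert n1 n2 n3}
    (hr : (GGraph n1 n2 n3).Reachable u v) :
    phiJ n1 u ≤ phiJ n1 v + (GGraph n1 n2 n3).dist u v := by
  obtain ⟨p, hp⟩ := hr.exists_walk_length_eq_dist
  have := phiJ_walk h1 p
  omega

lemma key_edge_eq (h1 : 5 ≤ n1) (h2 : 1 ≤ n2) (r : Fin n3) :
    edgeDist (GGraph n1 n2 n3) s(.a ⟨1, by omega⟩, .b ⟨0, h2⟩) (.j r) =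
    edgeDist (GGraph n1 n2 n3) s(.a ⟨1, by omega⟩, .a ⟨2, by omega⟩) (.j r) := by
  -- distance from a1 to j r is at most 3
  have hadj10 : (GGraph n1 n2 n3).Adj (.a ⟨1, by omega⟩) (.a ⟨0, by omega⟩) := by
    refine (adj_of_grel ?_ ?_).symm
    · intro h
      have := congrArg (fun x : GVert n1 n2 n3 => match x with | .a l => (l : ℕ) | _ => 0) h
      simpa using this
    · show ((⟨1, by omega⟩ : Fin n1) : ℕ) = (((⟨0, by omega⟩ : Fin n1) : ℕ) + 1) % n1
      simp [Nat.mod_eq_of_lt (by omega : 1 < n1)]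
  have hadj0i : (GGraph n1 n2 n3).Adj (.a ⟨0, by omega⟩) (.i) := by
    refine adj_of_grel (by simp) ?_
    show ((⟨0, by omega⟩ : Fin n1) : ℕ) = 0
    simp
  have hadjij : (GGraph n1 n2 n3).Adj (.i) (.j r) := adj_of_grel (by simp) (by simp [GRel])
  have hA1 : (GGraph n1 n2 n3).dist (.a ⟨1, by omega⟩) (.j r) ≤ 3 := by
    have := SimpleGraph.dist_le
      (SimpleGraph.Walk.cons hadj10 (SimpleGraph.Walk.cons hadj0i
        (SimpleGraph.Walk.cons hadjij SimpleGraph.Walk.nil)))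
    simpa using this
  have hreach := reach_all (n2 := n2) (n3 := n3) h1 h2
  have hB : 4 ≤ (GGraph n1 n2 n3).dist (.b ⟨0, h2⟩) (.j r) := by
    have hr : (GGraph n1 n2 n3).Reachable (.b ⟨0, h2⟩) (.j r) := (hreach _).symm.trans (hreach _)
    have := phiJ_dist h1 hr
    simpa [phiJ] using this
  have hA2 : 4 ≤ (GGraph n1 n2 n3).dist (.a ⟨2, by omega⟩) (.j r) := by
    have hr : (GGraph n1 n2 n3).Reachable (.a ⟨2, by omega⟩) (.j r) := (hreach _).symm.trans (hreach _)
    have hphi := phiJ_dist h1 hr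
    simp only [phiJ, Fin.val_mk] at hphi
    exact le_trans (by omega) (hphi.trans (le_of_eq (Nat.zero_add _)))
  show min ((GGraph n1 n2 n3).dist _ _) ((GGraph n1 n2 n3).dist _ _) = min ((GGraph n1 n2 n3).dist _ _) ((GGraph n1 n2 n3).dist _ _)
  rw [min_eq_left (le_trans hA1 (le_trans (by norm_num) hB)),
      min_eq_left (le_trans hA1 (le_trans (by norm_num) hA2))]

end Aux

/-- Observation 1 (edge part): `edim(G_{n1,n2,n3}) ≥ n3`. -/
theorem edgeMetricDim_GGraph_lower (n1 n2 n3 : ℕ) (h1 : 5 ≤ n1) (h2 : 1 ≤ n2) (h3 : 2 ≤ n3) :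
    n3 ≤ edgeMetricDim (GGraph n1 n2 n3) := by
  classical
  have hreach := reach_all (n2 := n2) (n3 := n3) h1 h2
  have hpair : ∀ u v : GVert n1 n2 n3, (GGraph n1 n2 n3).Reachable u v :=
    fun u v => (hreach u).symm.trans (hreach v)
  -- the whole vertex set is an edge metric generator
  have hkey : ∀ p q w1 w2 : GVert n1 n2 n3, (GGraph n1 n2 n3).Adj w1 w2 →
      p ≠ w1 → p ≠ w2 →
      edgeDist (GGraph n1 n2 n3) s(p, q) p ≠ edgeDist (GGraph n1 n2 n3) s(w1, w2) p := by
    intro p q w1 w2 hadj hp1 hp2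
    have d1 : (GGraph n1 n2 n3).dist w1 p ≠ 0 :=
      SimpleGraph.dist_ne_zero_iff_ne_and_reachable.mpr ⟨fun h => hp1 h.symm, hpair _ _⟩
    have d2 : (GGraph n1 n2 n3).dist w2 p ≠ 0 :=
      SimpleGraph.dist_ne_zero_iff_ne_and_reachable.mpr ⟨fun h => hp2 h.symm, hpair _ _⟩
    show min ((GGraph n1 n2 n3).dist p p) ((GGraph n1 n2 n3).dist q p) ≠
        min ((GGraph n1 n2 n3).dist w1 p) ((GGraph n1 n2 n3).dist w2 p)
    rw [SimpleGraph.dist_self]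
    omega
  have huniv : IsEdgeMetricGenerator (GGraph n1 n2 n3) Set.univ := by
    intro e he f hf hef
    induction e with
    | _ u v =>
      induction f with
      | _ x y =>
        rw [SimpleGraph.mem_edgeSet] at he hf
        rcases eq_or_ne u x with hux | hux
        · subst hux
          rcases eq_or_ne v y with hvy | hvy
          · exact absurd (by rw [hvy]) hef
          · refine ⟨v, Set.mem_univ v, ?_⟩
            rw [Sym2.eq_swap (a := u) (b := v)]
            exact hkey v u u y hf (fun h => (GGraph n1 n2 n3).ne_of_adj he.symm h) hvy
        · rcases eq_or_ne u y with huy | huy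
          · subst huy
            rcases eq_or_ne v x with hvx | hvx
            · exact absurd (by rw [hvx, Sym2.eq_swap]) hef
            · refine ⟨v, Set.mem_univ v, ?_⟩
              rw [Sym2.eq_swap (a := u) (b := v)]
              exact hkey v u x u hf hvx (fun h => (GGraph n1 n2 n3).ne_of_adj he.symm h)
          · exact ⟨u, Set.mem_univ u, hkey u v x y hf hux huy⟩
  have hTne : {n | ∃ S : Set (GVert n1 n2 n3), S.Finite ∧
      IsEdgeMetricGenerator (GGraph n1 n2 n3) S ∧ S.ncard = n}.Nonempty :=
    ⟨_, Set.univ, Set.finite_univ, huniv, rfl⟩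
  obtain ⟨S, hSfin, hSgen, hScard⟩ := Nat.sInf_mem hTne
  rw [edgeMetricDim, ← hScard]
  -- Step A: for distinct s t, S contains j s or j t
  have hadjij : ∀ r : Fin n3, (GGraph n1 n2 n3).Adj .i (.j r) :=
    fun r => adj_of_grel (by simp) (by simp [GRel])
  have hA : ∀ s t : Fin n3, s ≠ t → (GVert.j s : GVert n1 n2 n3) ∈ S ∨ GVert.j t ∈ S := by
    intro s t hst
    by_contra hc
    push_neg at hc
    have he : s(GVert.i, (GVert.j s : GVert n1 n2 n3)) ∈ (GGraph n1 n2 n3).edgeSet :=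
      (SimpleGraph.mem_edgeSet _).mpr (hadjij s)
    have hf : s(GVert.i, (GVert.j t : GVert n1 n2 n3)) ∈ (GGraph n1 n2 n3).edgeSet :=
      (SimpleGraph.mem_edgeSet _).mpr (hadjij t)
    have hne : s(GVert.i, (GVert.j s : GVert n1 n2 n3)) ≠ s(GVert.i, GVert.j t) := by
      intro hh
      rw [Sym2.eq_iff] at hh
      rcases hh with ⟨-, hj⟩ | ⟨hj, -⟩
      · exact hst (GVert.j_injective hj)
      · cases hj
    obtain ⟨z, hzS, hz⟩ := hSgen _ he _ hf hne
    apply hz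
    have hzs : z ≠ GVert.j s := fun h => hc.1 (h ▸ hzS)
    have hzt : z ≠ GVert.j t := fun h => hc.2 (h ▸ hzS)
    have hfix : swapJ s t z = z := by
      cases z with
      | j r =>
        have hrs : r ≠ s := fun h => hzs (by rw [h])
        have hrt : r ≠ t := fun h => hzt (by rw [h])
        simp [swapJ, Equiv.swap_apply_of_ne_of_ne hrs hrt]
      | a k => rfl
      | b m => rfl
      | c => rfl
      | i => rfl
    have hdd : (GGraph n1 n2 n3).dist (.j t) z = (GGraph n1 n2 n3).dist (.j s) z := by
      have := dist_swapJ s t (.j s) z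
      rw [hfix] at this
      simpa [swapJ] using this
    show min ((GGraph n1 n2 n3).dist .i z) ((GGraph n1 n2 n3).dist (.j s) z) =
        min ((GGraph n1 n2 n3).dist .i z) ((GGraph n1 n2 n3).dist (.j t) z)
    rw [hdd]
  -- Step B: S contains a vertex which is not a pendant vertex j r
  have hB : ∃ z ∈ S, ∀ r : Fin n3, z ≠ GVert.j r := by
    have hadj1b : (GGraph n1 n2 n3).Adj (.a ⟨1, by omega⟩) (.b ⟨0, h2⟩) := by
      refine adj_of_grel (by simp) ?_
      show ((⟨1, by omega⟩ : Fin n1) : ℕ) = 1 ∧ ((⟨0, h2⟩ : Fin n2) : ℕ) = 0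
      simp
    have hadj12 : (GGraph n1 n2 n3).Adj (.a ⟨1, by omega⟩) (.a ⟨2, by omega⟩) := by
      refine adj_of_grel ?_ ?_
      · intro h
        have := congrArg (fun x : GVert n1 n2 n3 => match x with | .a l => (l : ℕ) | _ => 0) h
        simpa using this
      · show ((⟨2, by omega⟩ : Fin n1) : ℕ) = (((⟨1, by omega⟩ : Fin n1) : ℕ) + 1) % n1
        simp [Nat.mod_eq_of_lt (by omega : 2 < n1)]
    have hne : s((GVert.a ⟨1, by omega⟩ : GVert n1 n2 n3), GVert.b ⟨0, h2⟩) ≠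
        s(GVert.a ⟨1, by omega⟩, GVert.a ⟨2, by omega⟩) := by
      intro hh
      rw [Sym2.eq_iff] at hh
      rcases hh with ⟨-, hj⟩ | ⟨hj, -⟩ <;> cases hj
    obtain ⟨z, hzS, hz⟩ := hSgen _ ((SimpleGraph.mem_edgeSet _).mpr hadj1b) _
      ((SimpleGraph.mem_edgeSet _).mpr hadj12) hne
    refine ⟨z, hzS, fun r hr => hz ?_⟩
    subst hr
    exact key_edge_eq h1 h2 r
  obtain ⟨z, hzS, hzj⟩ := hB
  -- counting
  set A : Set (Fin n3) := {t | (GVert.j t : GVert n1 n2 n3) ∈ S} with hAdef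
  have hAc : Aᶜ.ncard ≤ 1 := by
    rw [Set.ncard_le_one (Set.toFinite _)]
    intro s hs t ht
    by_contra hst
    rcases hA s t hst with h | h
    · exact hs h
    · exact ht h
  have hcompl : A.ncard + Aᶜ.ncard = n3 := by
    rw [Set.ncard_add_ncard_compl]
    simp [Nat.card_eq_fintype_card]
  have hzim : z ∉ GVert.j '' A := by
    rintro ⟨r, -, hr⟩
    exact hzj r hr.symm
  have hsub : insert z (GVert.j '' A) ⊆ S := by
    rw [Set.insert_subset_iff]
    refine ⟨hzS, ?_⟩
    rintro _ ⟨r, hrA, rfl⟩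
    exact hrA
  calc n3 ≤ A.ncard + 1 := by omega
    _ = (GVert.j '' A).ncard + 1 := by rw [Set.ncard_image_of_injective _ GVert.j_injective]
    _ = (insert z (GVert.j '' A)).ncard := (Set.ncard_insert_of_notMem hzim (Set.toFinite _)).symm
    _ ≤ S.ncard := Set.ncard_le_ncard hsub hSfin
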